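/- arXiv:1010.4381 — 4 statements merged into one kernel-verified Lean document; each statement's English description precedes it below -/
import Mathlib

section
/- Lemma (joint asymptotic independence, Section 7.4): Let Wₙ be random vectors in ℝ^l and Wₙ* random vectors in ℝ^k, defined on a common probability space (Ω, 𝓕, P); let Q be a probability measure on ℝ^l and Q* a probability measure on ℝ^k; let 𝓕ₙ ⊆ 𝓕 be σ-fields such that Wₙ is 𝓕ₙ-measurable. Suppose: (i) Wₙ converges in distribution to Q; (ii) there exist 𝓕ₙ-measurable random probability measures κₙ on ℝ^k that are versions of the conditional distribution of Wₙ* given 𝓕ₙ (i.e., for every bounded measurable g : ℝ^k → ℝ, E[g(Wₙ*) | 𝓕ₙ] = ∫ g dκₙ almost surely); and (iii) for every bounded continuous f : ℝ^k → ℝ, ∫ f dκₙ → ∫ f dQ* in probability. Then the pair (Wₙ, Wₙ*) converges in distribution to the product measure Q ⊗ Q* on ℝ^l × ℝ^k. -/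
open MeasureTheory ProbabilityTheory Filter

/-- Convergence in distribution, tested against bounded continuous functions. -/
def TendstoInDistribution {Ω E : Type*} [MeasurableSpace Ω] [TopologicalSpace E]
    [MeasurableSpace E]
    (P : MeasureTheory.Measure Ω) (W : ℕ → Ω → E) (Q : MeasureTheory.Measure E) : Prop :=
  ∀ f : BoundedContinuousFunction E ℝ,
    Tendsto (fun n => ∫ ω, f (W n ω) ∂P) atTop (nhds (∫ x, f x ∂Q))

/-!
Conditioning on `𝓕ₙ`, for bounded continuous `g` and `h` one has
`E[g(Wₙ) h(Wₙ*)] = E[g(Wₙ) ∫ h dκₙ]`. Since `∫ h dκₙ → ∫ h dQ*` in probability and stays bounded,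
this tends to `∫ g dQ · ∫ h dQ*`. The products `g(x) h(y)` span a point-separating algebra of
bounded continuous functions on the product space, and the joint laws are tight because both
marginals converge; by Prokhorov's theorem, convergence of the integrals of such an algebra is
weak convergence.
-/

open Topology BoundedContinuousFunction

namespace BoundedContinuousFunction

variable (X Y : Type*) [TopologicalSpace X] [TopologicalSpace Y]

def prodMulSubmonoid : Submonoid (X × Y →ᵇ ℝ) where
  carrier := {u | ∃ (f : X →ᵇ ℝ) (g : Y →ᵇ ℝ), ∀ p, u p = f p.1 * g p.2}
  one_mem' := ⟨1, 1, fun p => by simp⟩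
  mul_mem' := by
    rintro u v ⟨f, g, hu⟩ ⟨f', g', hv⟩
    exact ⟨f * f', g * g', fun p => by simp only [coe_mul, Pi.mul_apply, hu, hv]; ring⟩

noncomputable def prodMulStarSubalgebra : StarSubalgebra ℝ (X × Y →ᵇ ℝ) :=
  { Algebra.adjoin ℝ (prodMulSubmonoid X Y : Set (X × Y →ᵇ ℝ)) with
    star_mem' := fun {u} hu => by
      convert hu
      ext p
      simp }

variable {X Y}

theorem mem_span_of_mem_prodMulStarSubalgebra {u : X × Y →ᵇ ℝ}
    (hu : u ∈ prodMulStarSubalgebra X Y) :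
    u ∈ Submodule.span ℝ (prodMulSubmonoid X Y : Set (X × Y →ᵇ ℝ)) := by
  rw [← Algebra.adjoin_eq_span_of_subset ℝ
    (by rw [Submonoid.closure_eq]; exact Submodule.subset_span)]
  exact hu

theorem exists_apply_ne_apply_of_ne [T35Space X] {x x' : X} (h : x ≠ x') :
    ∃ f : X →ᵇ ℝ, f x ≠ f x' := by
  obtain ⟨f, hf, hfx, hfx'⟩ :=
    CompletelyRegularSpace.completely_regular x {x'} isClosed_singleton (by simpa using h)
  refine ⟨(mkOfCompact ⟨((↑) : unitInterval → ℝ), continuous_subtype_val⟩).compContinuous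
    ⟨f, hf⟩, ?_⟩
  simp [hfx, hfx' rfl]

theorem separatesPoints_prodMulStarSubalgebra [T35Space X] [T35Space Y] :
    ((prodMulStarSubalgebra X Y).map (toContinuousMapStarₐ ℝ)).SeparatesPoints := by
  intro p q hpq
  suffices ∃ (f : X →ᵇ ℝ) (g : Y →ᵇ ℝ), f p.1 * g p.2 ≠ f q.1 * g q.2 by
    obtain ⟨f, g, hfg⟩ := this
    let u : X × Y →ᵇ ℝ :=
      f.compContinuous ⟨Prod.fst, continuous_fst⟩ * g.compContinuous ⟨Prod.snd, continuous_snd⟩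
    exact ⟨_, ⟨toContinuousMapStarₐ ℝ u, ⟨u, Algebra.subset_adjoin ⟨f, g, fun _ => rfl⟩, rfl⟩,
      rfl⟩, hfg⟩
  rcases not_and_or.mp (Prod.ext_iff.not.mp hpq) with h | h
  · obtain ⟨f, hf⟩ := exists_apply_ne_apply_of_ne h
    exact ⟨f, 1, by simpa using hf⟩
  · obtain ⟨g, hg⟩ := exists_apply_ne_apply_of_ne h
    exact ⟨1, g, by simpa using hg⟩

end BoundedContinuousFunction

namespace MeasureTheory

theorem isTightMeasureSet_range_of_tendsto {E : Type*} [PseudoMetricSpace E] [CompleteSpace E]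
    [SecondCountableTopology E] [MeasurableSpace E] [OpensMeasurableSpace E]
    {μ : ℕ → ProbabilityMeasure E} {ν : ProbabilityMeasure E} (h : Tendsto μ atTop (𝓝 ν)) :
    IsTightMeasureSet (Set.range fun n => (μ n : Measure E)) := by
  have := isTightMeasureSet_of_isCompact_closure
    (h.isCompact_insert_range.closure_of_subset (Set.subset_insert _ _))
  simpa [Set.range] using this

theorem ProbabilityMeasure.tendsto_of_forall_tendsto_integral_mul {X Y : Type*} [MetricSpace X]
    [CompleteSpace X] [SecondCountableTopology X] [MeasurableSpace X] [BorelSpace X]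
    [MetricSpace Y] [CompleteSpace Y] [SecondCountableTopology Y] [MeasurableSpace Y]
    [BorelSpace Y] {μ : ℕ → ProbabilityMeasure (X × Y)} {ν : ProbabilityMeasure (X × Y)}
    (h : ∀ (f : X →ᵇ ℝ) (g : Y →ᵇ ℝ),
      Tendsto (fun n => ∫ p, f p.1 * g p.2 ∂(μ n : Measure (X × Y))) atTop
        (𝓝 (∫ p, f p.1 * g p.2 ∂(ν : Measure (X × Y))))) :
    Tendsto μ atTop (𝓝 ν) := by
  have h_fst : Tendsto (fun n => (μ n).map measurable_fst.aemeasurable) atTop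
      (𝓝 (ν.map measurable_fst.aemeasurable)) := by
    refine tendsto_iff_forall_integral_tendsto.mpr fun f => ?_
    simpa [toMeasure_map, integral_map measurable_fst.aemeasurable
      f.continuous.aestronglyMeasurable] using h f 1
  have h_snd : Tendsto (fun n => (μ n).map measurable_snd.aemeasurable) atTop
      (𝓝 (ν.map measurable_snd.aemeasurable)) := by
    refine tendsto_iff_forall_integral_tendsto.mpr fun g => ?_
    simpa [toMeasure_map, integral_map measurable_snd.aemeasurable
      g.continuous.aestronglyMeasurable] using h 1 g
  have h_tight : IsTightMeasureSet (Set.range fun n => (μ n : Measure (X × Y))) := by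
    refine IsTightMeasureSet.prodMk ?_ ?_
    · simpa [← Set.range_comp, Function.comp_def, Measure.fst, toMeasure_map]
        using isTightMeasureSet_range_of_tendsto h_fst
    · simpa [← Set.range_comp, Function.comp_def, Measure.snd, toMeasure_map]
        using isTightMeasureSet_range_of_tendsto h_snd
  refine tendsto_of_tight_of_separatesPoints ℝ h_tight separatesPoints_prodMulStarSubalgebra
    fun u hu => ?_
  replace hu := mem_span_of_mem_prodMulStarSubalgebra hu
  induction hu using Submodule.span_induction with
  | mem u hu =>
    obtain ⟨f, g, hu⟩ := hu
    simpa only [hu] using h f g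
  | zero => simp
  | add u v _ _ hu hv =>
    simpa only [coe_add, Pi.add_apply, integral_add (u.integrable _) (v.integrable _)]
      using hu.add hv
  | smul c u _ hu =>
    simpa only [coe_smul, Pi.smul_apply, integral_smul] using hu.const_smul c

section

variable {α : Type*} {m m₀ : MeasurableSpace α} {μ : Measure α} [IsFiniteMeasure μ]

theorem TendstoInMeasure.tendsto_integral_norm_sub {E : Type*} [NormedAddCommGroup E]
    {f : ℕ → α → E} {g : α → E} {C : ℝ} (hfg : TendstoInMeasure μ f atTop g)
    (hf : ∀ n, AEStronglyMeasurable (f n) μ) (hg : AEStronglyMeasurable g μ)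
    (hC : ∀ n, ∀ᵐ x ∂μ, ‖f n x - g x‖ ≤ C) :
    Tendsto (fun n => ∫ x, ‖f n x - g x‖ ∂μ) atTop (𝓝 0) := by
  refine tendsto_of_subseq_tendsto fun ns hns => ?_
  obtain ⟨ms, -, hms⟩ := TendstoInMeasure.exists_seq_tendsto_ae fun ε hε => (hfg ε hε).comp hns
  refine ⟨ms, ?_⟩
  simpa using tendsto_integral_of_dominated_convergence (fun _ => C)
    (fun n => ((hf _).sub hg).norm) (integrable_const C) (fun n => by simpa using hC _)
    (hms.mono fun x hx => tendsto_iff_norm_sub_tendsto_zero.mp hx)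

theorem integral_mul_condExp (hm : m ≤ m₀) {a Y : α → ℝ} {A : ℝ}
    (ha : StronglyMeasurable[m] a) (ha_bdd : ∀ x, |a x| ≤ A) (hY : Integrable Y μ) :
    ∫ x, a x * μ[Y|m] x ∂μ = ∫ x, a x * Y x ∂μ := by
  have haY : Integrable (a * Y) μ :=
    hY.bdd_mul (ha.mono hm).aestronglyMeasurable (.of_forall ha_bdd)
  calc ∫ x, a x * μ[Y|m] x ∂μ = ∫ x, μ[a * Y|m] x ∂μ :=
        integral_congr_ae (condExp_mul_of_stronglyMeasurable_left ha haY hY).symm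
    _ = ∫ x, a x * Y x ∂μ := integral_condExp hm

theorem tendsto_integral_mul_of_tendstoInMeasure_const {a X : ℕ → α → ℝ} {A C b c : ℝ}
    (ha : ∀ n, AEStronglyMeasurable (a n) μ) (ha_bdd : ∀ n x, |a n x| ≤ A)
    (ha_lim : Tendsto (fun n => ∫ x, a n x ∂μ) atTop (𝓝 b))
    (hX : ∀ n, AEStronglyMeasurable (X n) μ) (hX_bdd : ∀ n, ∀ᵐ x ∂μ, |X n x| ≤ C)
    (hXc : TendstoInMeasure μ X atTop fun _ => c) :
    Tendsto (fun n => ∫ x, a n x * X n x ∂μ) atTop (𝓝 (b * c)) := by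
  have hXc_int n : Integrable (fun x => X n x - c) μ :=
    (Integrable.of_bound (hX n) C (hX_bdd n)).sub (integrable_const c)
  have h_err : Tendsto (fun n => ∫ x, a n x * (X n x - c) ∂μ) atTop (𝓝 0) := by
    have hL1 := hXc.tendsto_integral_norm_sub hX aestronglyMeasurable_const (C := C + |c|)
      fun n => (hX_bdd n).mono fun x hx => (abs_sub _ _).trans (by gcongr)
    refine squeeze_zero_norm (fun n => ?_) (by simpa using hL1.const_mul A)
    rw [← integral_const_mul]
    refine norm_integral_le_of_norm_le ((hXc_int n).norm.const_mul A) (.of_forall fun x => ?_)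
    rw [norm_mul]
    exact mul_le_mul_of_nonneg_right (ha_bdd n x) (norm_nonneg _)
  have h_split n :
      ∫ x, a n x * X n x ∂μ = ∫ x, a n x * (X n x - c) ∂μ + (∫ x, a n x ∂μ) * c := by
    rw [← integral_mul_const, ← integral_add]
    · simp_rw [mul_sub, sub_add_cancel]
    · exact (hXc_int n).bdd_mul (ha n) (.of_forall (ha_bdd n))
    · exact (Integrable.of_bound (ha n) A (.of_forall (ha_bdd n))).mul_const c
  simpa only [h_split, zero_add] using h_err.add (ha_lim.mul_const c)

end

end MeasureTheory

theorem tendsto_integral_mul_of_condDistrib_tendsto {Ω E E' : Type*} [m : MeasurableSpace Ω] {P : Measure Ω}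
    [IsFiniteMeasure P] [TopologicalSpace E] [MeasurableSpace E] [OpensMeasurableSpace E]
    [TopologicalSpace E'] [MeasurableSpace E'] [OpensMeasurableSpace E']
    {Q : Measure E} {Q' : Measure E'} {F : ℕ → MeasurableSpace Ω} {W : ℕ → Ω → E}
    {W' : ℕ → Ω → E'} {κ : ℕ → Ω → Measure E'} (hF : ∀ n, F n ≤ m)
    (hWmeas : ∀ n, Measurable[F n] (W n)) (hW'meas : ∀ n, Measurable (W' n))
    (hW : TendstoInDistribution P W Q) (g : E →ᵇ ℝ) (h : E' →ᵇ ℝ)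
    (hκcond : ∀ n, P[fun ω => h (W' n ω)|F n] =ᵐ[P] fun ω => ∫ y, h y ∂κ n ω)
    (hκtendsto : ∀ δ > 0,
      Tendsto (fun n => P {ω | δ ≤ |∫ y, h y ∂κ n ω - ∫ y, h y ∂Q'|}) atTop (𝓝 0)) :
    Tendsto (fun n => ∫ ω, g (W n ω) * h (W' n ω) ∂P) atTop
      (𝓝 ((∫ x, g x ∂Q) * ∫ y, h y ∂Q')) := by
  have hg_bdd n ω : |g (W n ω)| ≤ ‖g‖ := g.norm_coe_le_norm _
  have hh_int n : Integrable (fun ω => h (W' n ω)) P :=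
    .of_bound (h.continuous.measurable.comp (hW'meas n)).aestronglyMeasurable ‖h‖
      (.of_forall fun _ => h.norm_coe_le_norm _)
  have h_cond n : ∫ ω, g (W n ω) * h (W' n ω) ∂P = ∫ ω, g (W n ω) * ∫ y, h y ∂κ n ω ∂P := by
    rw [← integral_mul_condExp (hF n) (a := fun ω => g (W n ω))
      (g.continuous.measurable.comp (hWmeas n)).stronglyMeasurable (hg_bdd n) (hh_int n)]
    exact integral_congr_ae ((hκcond n).mono fun ω hω => congrArg (g (W n ω) * ·) hω)
  simp_rw [h_cond]
  refine tendsto_integral_mul_of_tendstoInMeasure_const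
    (fun n => (g.continuous.measurable.comp ((hWmeas n).mono (hF n) le_rfl)).aestronglyMeasurable)
    hg_bdd (hW g)
    (fun n => (stronglyMeasurable_condExp.mono (hF n)).aestronglyMeasurable.congr (hκcond n))
    (C := ‖h‖) (fun n => ?_) (tendstoInMeasure_iff_dist.mpr
      fun δ hδ => by simpa [Real.dist_eq] using hκtendsto δ hδ)
  filter_upwards [hκcond n, ae_bdd_abs_condExp_of_ae_bdd_abs (m := F n) (μ := P)
    (.of_forall fun ω => h.norm_coe_le_norm (W' n ω))] with ω hω hbd
  rwa [← hω]

theorem joint_asymptotic_independence_general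
    {Ω : Type*} [m : MeasurableSpace Ω] (P : Measure Ω) [IsProbabilityMeasure P]
    (l k : ℕ)
    (W : ℕ → Ω → (Fin l → ℝ)) (Wstar : ℕ → Ω → (Fin k → ℝ))
    (Q : Measure (Fin l → ℝ)) [IsProbabilityMeasure Q]
    (Qstar : Measure (Fin k → ℝ)) [IsProbabilityMeasure Qstar]
    (F : ℕ → MeasurableSpace Ω) (hF : ∀ n, F n ≤ m)
    (hWmeas : ∀ n, Measurable[F n] (W n))
    (hWstarmeas : ∀ n, Measurable (Wstar n))
    (hW : TendstoInDistribution P W Q)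
    (κ : ℕ → Ω → Measure (Fin k → ℝ))
    (hκcond : ∀ n, ∀ g : (Fin k → ℝ) → ℝ, Measurable g → (∃ C, ∀ x, |g x| ≤ C) →
        P[(fun ω => g (Wstar n ω))|F n] =ᵐ[P] fun ω => ∫ x, g x ∂(κ n ω))
    (hκtendsto : ∀ f : BoundedContinuousFunction (Fin k → ℝ) ℝ, ∀ δ > (0:ℝ),
        Tendsto (fun n =>
            P {ω | δ ≤ |(∫ x, f x ∂(κ n ω)) - ∫ x, f x ∂Qstar|})
          atTop (nhds 0)) :
    TendstoInDistribution P (fun n ω => (W n ω, Wstar n ω)) (Q.prod Qstar) := by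
  have h_pair n : AEMeasurable (fun ω => (W n ω, Wstar n ω)) P :=
    (((hWmeas n).mono (hF n) le_rfl).prodMk (hWstarmeas n)).aemeasurable
  have h_law : Tendsto (β := ProbabilityMeasure ((Fin l → ℝ) × (Fin k → ℝ)))
      (fun n => ⟨P.map fun ω => (W n ω, Wstar n ω), Measure.isProbabilityMeasure_map (h_pair n)⟩)
      atTop (𝓝 ⟨Q.prod Qstar, inferInstance⟩) := by
    refine ProbabilityMeasure.tendsto_of_forall_tendsto_integral_mul fun g h => ?_
    have h_cond n := hκcond n h h.continuous.measurable ⟨‖h‖, h.norm_coe_le_norm⟩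
    simp only [ProbabilityMeasure.coe_mk, integral_prod_mul]
    refine (tendsto_integral_mul_of_condDistrib_tendsto hF hWmeas hWstarmeas hW g h h_cond
      (hκtendsto h)).congr fun n => ?_
    exact (integral_map (h_pair n)
      (g.continuous.fst'.mul h.continuous.snd').aestronglyMeasurable).symm
  intro f
  refine (ProbabilityMeasure.tendsto_iff_forall_integral_tendsto.mp h_law f).congr fun n => ?_
  exact integral_map (h_pair n) f.continuous.aestronglyMeasurable

/-- Lemma on joint asymptotic independence (Section 7.4): if `Wₙ ⇒ Q`, `Wₙ` is
`𝓕ₙ`-measurable, and the conditional distribution of `Wₙ*` given `𝓕ₙ` converges in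
probability to `Q*` (tested on bounded continuous functions), then
`(Wₙ, Wₙ*) ⇒ Q ⊗ Q*`. -/
theorem joint_asymptotic_independence
    {Ω : Type*} [m : MeasurableSpace Ω] (P : Measure Ω) [IsProbabilityMeasure P]
    (l k : ℕ)
    (W : ℕ → Ω → (Fin l → ℝ)) (Wstar : ℕ → Ω → (Fin k → ℝ))
    (Q : Measure (Fin l → ℝ)) [IsProbabilityMeasure Q]
    (Qstar : Measure (Fin k → ℝ)) [IsProbabilityMeasure Qstar]
    (F : ℕ → MeasurableSpace Ω) (hF : ∀ n, F n ≤ m)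
    (hWmeas : ∀ n, Measurable[F n] (W n))
    (hWstarmeas : ∀ n, Measurable (Wstar n))
    (hW : TendstoInDistribution P W Q)
    (κ : ℕ → Ω → Measure (Fin k → ℝ))
    (hκprob : ∀ n ω, IsProbabilityMeasure (κ n ω))
    (hκmeas : ∀ n, ∀ B : Set (Fin k → ℝ), MeasurableSet B →
        Measurable[F n] (fun ω => κ n ω B))
    (hκcond : ∀ n, ∀ g : (Fin k → ℝ) → ℝ, Measurable g → (∃ C, ∀ x, |g x| ≤ C) →
        P[(fun ω => g (Wstar n ω))|F n] =ᵐ[P] fun ω => ∫ x, g x ∂(κ n ω))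
    (hκtendsto : ∀ f : BoundedContinuousFunction (Fin k → ℝ) ℝ, ∀ δ > (0:ℝ),
        Tendsto (fun n =>
            P {ω | δ ≤ |(∫ x, f x ∂(κ n ω)) - ∫ x, f x ∂Qstar|})
          atTop (nhds 0)) :
    TendstoInDistribution P (fun n ω => (W n ω, Wstar n ω)) (Q.prod Qstar) :=
  joint_asymptotic_independence_general (m := m) P l k W Wstar Q Qstar F hF hWmeas hWstarmeas hW κ
    hκcond hκtendsto
end

section
/- Unique minimizer under small misspecification (Section 4.2): Fix H ∈ (0, 1/2] and θ₀ ∈ [0,1], and let f : [0,1] → ℝ be integrable with ∫₀¹ |f(t)| dt < 1/2. Define g(θ) = |θ − θ₀|^(2H) − ∫₀¹ f(t) [t^(2H) + θ^(2H) − |θ − t|^(2H)] dt for θ ∈ [0,1]. Then for every θ ∈ [0,1], g(θ) − g(θ₀) ≥ (1 − 2 ∫₀¹ |f(t)| dt) · |θ − θ₀|^(2H); in particular θ₀ is the unique minimizer of g on [0,1]. -/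
/-!
The criterion is `g(θ) = |θ − θ₀|^(2H) − ∫ f(t) c(θ, t) dt` with the kernel
`c(θ, t) = t^(2H) + θ^(2H) − |θ − t|^(2H)`. Since `x ↦ x^(2H)` is subadditive for `2H ≤ 1`,
both `θ ↦ θ^(2H)` and `θ ↦ |θ − t|^(2H)` are `2H`-Hölder with constant one, so
`|c(θ, t) − c(θ₀, t)| ≤ 2 |θ − θ₀|^(2H)`. Integrating against `f` perturbs the leading term
`|θ − θ₀|^(2H)` by at most `2 ∫|f| · |θ − θ₀|^(2H)`.
-/

open MeasureTheory Filter

namespace Real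

lemma abs_rpow_sub_rpow_le {p a b : ℝ} (ha : 0 ≤ a) (hb : 0 ≤ b) (hp0 : 0 ≤ p) (hp1 : p ≤ 1) :
    |a ^ p - b ^ p| ≤ |a - b| ^ p := by
  wlog hba : b ≤ a generalizing a b
  · rw [abs_sub_comm, abs_sub_comm a]
    exact this hb ha (le_of_not_ge hba)
  have hsub : a ^ p ≤ (a - b) ^ p + b ^ p := by
    simpa using rpow_add_le_add_rpow (sub_nonneg.2 hba) hb hp0 hp1
  rw [abs_of_nonneg (sub_nonneg.2 (rpow_le_rpow hb hba hp0)), abs_of_nonneg (sub_nonneg.2 hba)]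
  linarith

lemma abs_abs_sub_rpow_sub_abs_sub_rpow_le {p : ℝ} (x y t : ℝ) (hp0 : 0 ≤ p) (hp1 : p ≤ 1) :
    |(|x - t| ^ p - |y - t| ^ p)| ≤ |x - y| ^ p :=
  calc |(|x - t| ^ p - |y - t| ^ p)| ≤ |(|x - t| - |y - t|)| ^ p :=
        abs_rpow_sub_rpow_le (abs_nonneg _) (abs_nonneg _) hp0 hp1
    _ ≤ |x - y| ^ p := rpow_le_rpow (abs_nonneg _) (by
        simpa using abs_abs_sub_abs_le_abs_sub (x - t) (y - t)) hp0

end Real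

lemma abs_fbmKernel_sub_le {p x y : ℝ} (t : ℝ) (hx : 0 ≤ x) (hy : 0 ≤ y) (hp0 : 0 ≤ p)
    (hp1 : p ≤ 1) :
    |(t ^ p + x ^ p - |x - t| ^ p) - (t ^ p + y ^ p - |y - t| ^ p)| ≤ 2 * |x - y| ^ p :=
  calc |(t ^ p + x ^ p - |x - t| ^ p) - (t ^ p + y ^ p - |y - t| ^ p)|
      = |(x ^ p - y ^ p) - (|x - t| ^ p - |y - t| ^ p)| := by ring_nf
    _ ≤ |x ^ p - y ^ p| + |(|x - t| ^ p - |y - t| ^ p)| := abs_sub _ _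
    _ ≤ |x - y| ^ p + |x - y| ^ p := add_le_add (Real.abs_rpow_sub_rpow_le hx hy hp0 hp1)
        (Real.abs_abs_sub_rpow_sub_abs_sub_rpow_le x y t hp0 hp1)
    _ = 2 * |x - y| ^ p := by ring

lemma setIntegral_mul_sub_setIntegral_mul_le {α : Type*} [MeasurableSpace α] {μ : Measure α}
    {s : Set α} (hs : MeasurableSet s) {f u v : α → ℝ} {C : ℝ} (hf : IntegrableOn f s μ)
    (hu : IntegrableOn (fun t ↦ f t * u t) s μ) (hv : IntegrableOn (fun t ↦ f t * v t) s μ)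
    (huv : ∀ t ∈ s, |u t - v t| ≤ C) :
    ∫ t in s, f t * u t ∂μ - ∫ t in s, f t * v t ∂μ ≤ C * ∫ t in s, |f t| ∂μ := by
  rw [← integral_sub hu hv, ← integral_const_mul]
  refine setIntegral_mono_on (hu.sub hv) (hf.abs.const_mul C) hs fun t ht ↦ ?_
  calc f t * u t - f t * v t ≤ |f t * (u t - v t)| := by rw [← mul_sub]; exact le_abs_self _
    _ = |f t| * |u t - v t| := abs_mul _ _
    _ ≤ |f t| * C := by gcongr; exact huv t ht
    _ = C * |f t| := mul_comm _ _

lemma integrableOn_Icc_mul_fbmKernel {p : ℝ} (hp0 : 0 ≤ p) {f : ℝ → ℝ}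
    (hf : IntegrableOn f (Set.Icc 0 1)) (x : ℝ) :
    IntegrableOn (fun t ↦ f t * (t ^ p + x ^ p - |x - t| ^ p)) (Set.Icc 0 1) := by
  refine hf.mul_continuousOn (Continuous.continuousOn ?_) isCompact_Icc
  fun_prop (disch := exact Or.inr hp0)

/-- Unique minimizer of the population criterion under small partial misspecification:
if `∫|f| < 1/2` and `H ∈ (0, 1/2]`, the criterion
`g(θ) = |θ−θ₀|^(2H) − ∫₀¹ f(t)[t^(2H) + θ^(2H) − |θ−t|^(2H)] dt`
satisfies `g(θ) − g(θ₀) ≥ (1 − 2∫|f|)|θ−θ₀|^(2H)`; in particular `θ₀` is its unique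
minimizer on `[0,1]`. -/
theorem unique_minimizer_small_misspecification
    (H : ℝ) (hH : 0 < H) (hH' : H ≤ 1/2) (θ₀ : ℝ) (hθ₀ : θ₀ ∈ Set.Icc (0:ℝ) 1)
    (f : ℝ → ℝ) (hf : IntegrableOn f (Set.Icc (0:ℝ) 1))
    (hfsmall : (∫ t in Set.Icc (0:ℝ) 1, |f t|) < 1/2)
    (g : ℝ → ℝ)
    (hg : ∀ θ, g θ = |θ - θ₀| ^ (2 * H)
        - ∫ t in Set.Icc (0:ℝ) 1, f t * (t ^ (2 * H) + θ ^ (2 * H) - |θ - t| ^ (2 * H))) :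
    (∀ θ ∈ Set.Icc (0:ℝ) 1,
        g θ - g θ₀ ≥ (1 - 2 * ∫ t in Set.Icc (0:ℝ) 1, |f t|) * |θ - θ₀| ^ (2 * H)) ∧
    (∀ θ ∈ Set.Icc (0:ℝ) 1, θ ≠ θ₀ → g θ₀ < g θ) := by
  have hp0 : 0 < 2 * H := by positivity
  have hp1 : 2 * H ≤ 1 := by linarith
  have hgap : ∀ θ ∈ Set.Icc (0:ℝ) 1,
      g θ - g θ₀ ≥ (1 - 2 * ∫ t in Set.Icc (0:ℝ) 1, |f t|) * |θ - θ₀| ^ (2 * H) := by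
    intro θ hθ
    have hperturb := setIntegral_mul_sub_setIntegral_mul_le measurableSet_Icc hf
      (integrableOn_Icc_mul_fbmKernel hp0.le hf θ) (integrableOn_Icc_mul_fbmKernel hp0.le hf θ₀)
      fun t _ ↦ abs_fbmKernel_sub_le t hθ.1 hθ₀.1 hp0.le hp1
    rw [hg θ, hg θ₀, sub_self, abs_zero, Real.zero_rpow hp0.ne']
    linarith
  refine ⟨hgap, fun θ hθ hne ↦ ?_⟩
  have hdist : 0 < |θ - θ₀| ^ (2 * H) := by
    have := abs_pos.2 (sub_ne_zero.2 hne)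
    positivity
  nlinarith [hgap θ hθ]
end

section
/- Unique and well-separated minimum of the population criterion (Section 7.1): Fix H ∈ (0,1), α₀ ∈ ℝ, β₀ ≠ 0, θ₀ ∈ (0,1), and define Φ : ℝ² × [0,1] → ℝ by Φ(α, β, θ) = (α₀ − α)² + (β₀ − β)² θ₀^(2H) + β β₀ |θ₀ − θ|^(2H) + β (β₀ − β)(θ₀^(2H) − θ^(2H)). Then: (i) Φ(α, β, θ) ≥ 0 for all (α, β, θ) ∈ ℝ² × [0,1], with equality if and only if (α, β, θ) = (α₀, β₀, θ₀); and (ii) for every open set G ⊆ ℝ³ containing (α₀, β₀, θ₀), the infimum of Φ over (ℝ² × [0,1]) \ G is strictly positive. -/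
/-!
With `u = θ₀^H`, `v = θ^H`, `w = |θ₀ - θ|^H`, the criterion is
`Φ = (α₀ - α)² + Var(β₀ B(θ₀) - β B(θ))`, and this variance is the quadratic form
`u²x² + v²y² - xy(u² + v² - w²)`. Since `|s - t|^H` is a metric on `ℝ` for `H ≤ 1`,
`u, v, w` satisfy the triangle inequalities, hence `|u² + v² - w²| ≤ 2uv` and the form is
nonnegative; for `H < 1` strict subadditivity of `x ↦ x^H` makes the triangle inequalities strict
when `θ ∉ {0, θ₀}`, so the form is positive definite, which gives (i).

For (ii) the only difficulty is non-compactness. If `θ ≥ δ`, the form is at least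
`(θ^H |β| - θ₀^H |β₀|)²`, which is large for large `|β|`. Near `θ = 0` the cross term
`u² + v² - w²` is `v² + O(θ) = o(v)`, so the form is at least `¾ u² β₀²` uniformly in `β`.
The remaining region is compact and misses the minimiser.
-/

open Filter Topology Set

lemma Real.rpow_add_lt_add_rpow {p a b : ℝ} (ha : 0 < a) (hb : 0 < b) (hp : p < 1) :
    (a + b) ^ p < a ^ p + b ^ p := by
  have hab : 0 < a + b := by positivity
  have key {c : ℝ} (hc : 0 < c) : c ^ p = c ^ (p - 1) * c := by
    rw [← Real.rpow_add_one hc.ne', sub_add_cancel]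
  have ha' : (a + b) ^ (p - 1) < a ^ (p - 1) :=
    Real.rpow_lt_rpow_of_neg ha (by linarith) (by linarith)
  have hb' : (a + b) ^ (p - 1) < b ^ (p - 1) :=
    Real.rpow_lt_rpow_of_neg hb (by linarith) (by linarith)
  rw [key hab, key ha, key hb, mul_add]
  gcongr

lemma mul_rpow_sub_one_le_rpow {p s t : ℝ} (hs : 0 ≤ s) (hst : s ≤ t) (hp : p ≤ 1) :
    s * t ^ (p - 1) ≤ s ^ p := by
  rcases hs.eq_or_lt with rfl | hs
  · simpa using Real.rpow_nonneg le_rfl p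
  calc s * t ^ (p - 1) ≤ s * s ^ (p - 1) :=
        mul_le_mul_of_nonneg_left (Real.rpow_le_rpow_of_nonpos hs hst (by linarith)) hs.le
    _ = s ^ p := by rw [mul_comm, ← Real.rpow_add_one hs.ne', sub_add_cancel]

lemma abs_sub_rpow_le_add {p : ℝ} (hp₀ : 0 ≤ p) (hp₁ : p ≤ 1) (a b c : ℝ) :
    |a - c| ^ p ≤ |a - b| ^ p + |b - c| ^ p :=
  calc |a - c| ^ p ≤ (|a - b| + |b - c|) ^ p := by gcongr; exact abs_sub_le a b c
    _ ≤ |a - b| ^ p + |b - c| ^ p :=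
      Real.rpow_add_le_add_rpow (abs_nonneg _) (abs_nonneg _) hp₀ hp₁

lemma abs_sub_rpow_lt_add {p a b c : ℝ} (hp₀ : 0 ≤ p) (hp₁ : p < 1) (hab : a ≠ b)
    (hbc : b ≠ c) : |a - c| ^ p < |a - b| ^ p + |b - c| ^ p :=
  calc |a - c| ^ p ≤ (|a - b| + |b - c|) ^ p := by gcongr; exact abs_sub_le a b c
    _ < |a - b| ^ p + |b - c| ^ p := Real.rpow_add_lt_add_rpow
      (abs_pos.2 (sub_ne_zero.2 hab)) (abs_pos.2 (sub_ne_zero.2 hbc)) hp₁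

/-- The variance of `x X - y Y` for centred random variables with `‖X‖ = u`, `‖Y‖ = v` and
`‖X - Y‖ = w`. -/
def gramForm (u v w x y : ℝ) : ℝ := u ^ 2 * x ^ 2 + v ^ 2 * y ^ 2 - x * y * (u ^ 2 + v ^ 2 - w ^ 2)

lemma abs_sq_add_sq_sub_sq_le {u v w : ℝ} (huv : w ≤ u + v) (hvw : u ≤ w + v)
    (hwu : v ≤ w + u) : |u ^ 2 + v ^ 2 - w ^ 2| ≤ 2 * u * v := by
  rw [abs_le]; constructor <;> nlinarith

lemma abs_sq_add_sq_sub_sq_lt {u v w : ℝ} (huv : w < u + v) (hvw : u < w + v)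
    (hwu : v < w + u) : |u ^ 2 + v ^ 2 - w ^ 2| < 2 * u * v := by
  rw [abs_lt]; constructor <;> nlinarith

lemma le_gramForm (u v w x y : ℝ) :
    (u * |x| - v * |y|) ^ 2 + |x| * |y| * (2 * u * v - |u ^ 2 + v ^ 2 - w ^ 2|)
      ≤ gramForm u v w x y := by
  have : x * y * (u ^ 2 + v ^ 2 - w ^ 2) ≤ |x| * |y| * |u ^ 2 + v ^ 2 - w ^ 2| := by
    rw [← abs_mul, ← abs_mul]; exact le_abs_self _
  unfold gramForm
  nlinarith [sq_abs x, sq_abs y]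

lemma sq_sub_le_gramForm {u v w : ℝ} (h : |u ^ 2 + v ^ 2 - w ^ 2| ≤ 2 * u * v) (x y : ℝ) :
    (u * |x| - v * |y|) ^ 2 ≤ gramForm u v w x y := by
  nlinarith [le_gramForm u v w x y, mul_nonneg (abs_nonneg x) (abs_nonneg y)]

lemma gramForm_pos {u v w x : ℝ} (h : |u ^ 2 + v ^ 2 - w ^ 2| < 2 * u * v) (hx : x ≠ 0)
    (y : ℝ) : 0 < gramForm u v w x y := by
  refine lt_of_lt_of_le ?_ (le_gramForm u v w x y)
  rcases eq_or_ne y 0 with rfl | hy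
  · have hu : u ≠ 0 := by rintro rfl; simp at h; linarith [abs_nonneg (v ^ 2 - w ^ 2)]
    simpa using sq_pos_of_ne_zero (mul_ne_zero hu (abs_ne_zero.2 hx))
  · have := mul_pos (mul_pos (abs_pos.2 hx) (abs_pos.2 hy)) (sub_pos.2 h)
    positivity

lemma three_quarters_le_gramForm {u v w : ℝ} (h : |u ^ 2 + v ^ 2 - w ^ 2| ≤ u * v) (x y : ℝ) :
    3 / 4 * u ^ 2 * x ^ 2 ≤ gramForm u v w x y := by
  nlinarith [le_gramForm u v w x y, mul_nonneg (abs_nonneg x) (abs_nonneg y), sq_abs x,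
    sq_nonneg (u * |x| - 2 * v * |y|)]

/-- The variance of `x B(s) - y B(t)` for a fractional Brownian motion `B` with Hurst index `H`;
`(s^H)² + (t^H)² - (|s - t|^H)²` is twice the covariance of `B(s)` and `B(t)`. -/
noncomputable def fbmVar (H s t x y : ℝ) : ℝ := gramForm (s ^ H) (t ^ H) (|s - t| ^ H) x y

lemma fbmVar_eq {H s t : ℝ} (hs : 0 ≤ s) (ht : 0 ≤ t) (x y : ℝ) :
    fbmVar H s t x y = (x - y) ^ 2 * s ^ (2 * H) + y * x * |s - t| ^ (2 * H)
      + y * (x - y) * (s ^ (2 * H) - t ^ (2 * H)) := by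
  have sq {r : ℝ} (hr : 0 ≤ r) : r ^ (2 * H) = (r ^ H) ^ 2 := by
    rw [mul_comm, Real.rpow_mul hr, Real.rpow_two]
  rw [fbmVar, gramForm, sq hs, sq ht, sq (abs_nonneg _)]
  ring

lemma fbmVar_zero_right {H : ℝ} (hH : H ≠ 0) {s : ℝ} (hs : 0 ≤ s) (x y : ℝ) :
    fbmVar H s 0 x y = (s ^ H) ^ 2 * x ^ 2 := by
  simp [fbmVar, gramForm, Real.zero_rpow hH, abs_of_nonneg hs]

lemma fbmVar_self {H : ℝ} (hH : H ≠ 0) (s x y : ℝ) :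
    fbmVar H s s x y = (s ^ H) ^ 2 * (x - y) ^ 2 := by
  simp only [fbmVar, gramForm, sub_self, abs_zero, Real.zero_rpow hH]
  ring

lemma abs_fbmCov_le {H s t : ℝ} (hH₀ : 0 ≤ H) (hH₁ : H ≤ 1) (hs : 0 ≤ s) (ht : 0 ≤ t) :
    |(s ^ H) ^ 2 + (t ^ H) ^ 2 - (|s - t| ^ H) ^ 2| ≤ 2 * s ^ H * t ^ H := by
  have tri := abs_sub_rpow_le_add hH₀ hH₁
  refine abs_sq_add_sq_sub_sq_le ?_ ?_ ?_
  · simpa [abs_of_nonneg hs, abs_of_nonneg ht] using tri s 0 t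
  · simpa [abs_of_nonneg hs, abs_of_nonneg ht] using tri s t 0
  · simpa [abs_of_nonneg hs, abs_of_nonneg ht, abs_sub_comm s t] using tri t s 0

lemma abs_fbmCov_lt {H s t : ℝ} (hH₀ : 0 ≤ H) (hH₁ : H < 1) (hs : 0 < s) (ht : 0 < t)
    (hst : s ≠ t) : |(s ^ H) ^ 2 + (t ^ H) ^ 2 - (|s - t| ^ H) ^ 2| < 2 * s ^ H * t ^ H := by
  refine abs_sq_add_sq_sub_sq_lt ?_ ?_ ?_
  · simpa [abs_of_pos hs, abs_of_pos ht] using abs_sub_rpow_lt_add hH₀ hH₁ hs.ne' ht.ne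
  · simpa [abs_of_pos hs, abs_of_pos ht] using abs_sub_rpow_lt_add hH₀ hH₁ hst ht.ne'
  · simpa [abs_of_pos hs, abs_of_pos ht, abs_sub_comm s t] using
      abs_sub_rpow_lt_add hH₀ hH₁ hst.symm hs.ne'

lemma sq_sub_le_fbmVar {H s t : ℝ} (hH₀ : 0 ≤ H) (hH₁ : H ≤ 1) (hs : 0 ≤ s) (ht : 0 ≤ t)
    (x y : ℝ) : (s ^ H * |x| - t ^ H * |y|) ^ 2 ≤ fbmVar H s t x y :=
  sq_sub_le_gramForm (abs_fbmCov_le hH₀ hH₁ hs ht) x y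

lemma fbmVar_nonneg {H s t : ℝ} (hH₀ : 0 ≤ H) (hH₁ : H ≤ 1) (hs : 0 ≤ s) (ht : 0 ≤ t)
    (x y : ℝ) : 0 ≤ fbmVar H s t x y :=
  (sq_nonneg _).trans (sq_sub_le_fbmVar hH₀ hH₁ hs ht x y)

lemma fbmVar_pos {H s t x : ℝ} (hH₀ : 0 < H) (hH₁ : H < 1) (hs : 0 < s) (ht : 0 ≤ t)
    (hts : t ≠ s) (hx : x ≠ 0) (y : ℝ) : 0 < fbmVar H s t x y := by
  rcases ht.eq_or_lt with rfl | ht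
  · rw [fbmVar_zero_right hH₀.ne' hs.le]
    have := Real.rpow_pos_of_pos hs H
    positivity
  · exact gramForm_pos (abs_fbmCov_lt hH₀.le hH₁ hs ht hts.symm) hx y

lemma fbmVar_eq_zero_iff {H s t x y : ℝ} (hH₀ : 0 < H) (hH₁ : H < 1) (hs : 0 < s)
    (ht : 0 ≤ t) (hx : x ≠ 0) : fbmVar H s t x y = 0 ↔ t = s ∧ y = x := by
  constructor
  · intro h
    have hts : t = s := by
      by_contra hts
      exact (fbmVar_pos hH₀ hH₁ hs ht hts hx y).ne' h
    subst hts
    rw [fbmVar_self hH₀.ne'] at h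
    have := Real.rpow_pos_of_pos hs H
    simpa [this.ne', sub_eq_zero, eq_comm] using h
  · rintro ⟨rfl, rfl⟩
    simp [fbmVar_self hH₀.ne']

lemma eventually_abs_fbmCov_le {H s : ℝ} (hH₀ : 0 < H) (hH₁ : H < 1) (hs : 0 < s) :
    ∀ᶠ t in 𝓝[≥] 0, |(s ^ H) ^ 2 + (t ^ H) ^ 2 - (|s - t| ^ H) ^ 2| ≤ s ^ H * t ^ H := by
  -- `(s^H)² - ((s - t)^H)² ≤ K t = t^H · K t^(1 - H)`, and `t^(1 - H) → 0`
  set K := 2 * s ^ H * s ^ (H - 1)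
  have hg : ContinuousAt (fun t : ℝ => t ^ H + K * t ^ (1 - H)) 0 := by
    fun_prop (disch := (first | positivity | right; linarith))
  have hsmall : ∀ᶠ t in 𝓝 (0 : ℝ), t ^ H + K * t ^ (1 - H) < s ^ H := by
    refine hg.eventually_lt continuousAt_const ?_
    simp [Real.zero_rpow hH₀.ne', Real.zero_rpow (sub_ne_zero.2 hH₁.ne'), Real.rpow_pos_of_pos hs]
  filter_upwards [self_mem_nhdsWithin, nhdsWithin_le_nhds (hsmall.and (eventually_lt_nhds hs))]
    with t (ht : 0 ≤ t) ⟨hgt, hts⟩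
  have hw : |s - t| ^ H = (s - t) ^ H := by rw [abs_of_nonneg (by linarith)]
  have hwu : (s - t) ^ H ≤ s ^ H := Real.rpow_le_rpow (by linarith) (by linarith) hH₀.le
  have hwl : s ^ H - (s - t) ^ H ≤ s ^ (H - 1) * t := by
    have h := mul_rpow_sub_one_le_rpow (by linarith : 0 ≤ s - t) (by linarith : s - t ≤ s) hH₁.le
    have e : s ^ (H - 1) * s = s ^ H := by rw [← Real.rpow_add_one hs.ne', sub_add_cancel]
    nlinarith
  have ht_split : t ^ H * t ^ (1 - H) = t := by
    rw [← Real.rpow_add' ht (by simp), add_sub_cancel, Real.rpow_one]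
  have hdiff : (s ^ H) ^ 2 - ((s - t) ^ H) ^ 2 ≤ t ^ H * (K * t ^ (1 - H)) :=
    calc (s ^ H) ^ 2 - ((s - t) ^ H) ^ 2 = (s ^ H - (s - t) ^ H) * (s ^ H + (s - t) ^ H) := by ring
      _ ≤ (s ^ (H - 1) * t) * (2 * s ^ H) := by
        gcongr; linarith
      _ = K * (t ^ H * t ^ (1 - H)) := by rw [ht_split]; ring
      _ = t ^ H * (K * t ^ (1 - H)) := by ring
  have hv : 0 ≤ t ^ H := Real.rpow_nonneg ht H
  have hu : 0 ≤ s ^ H := Real.rpow_nonneg hs.le H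
  have hw0 : 0 ≤ (s - t) ^ H := Real.rpow_nonneg (by linarith) H
  rw [hw, abs_le]
  constructor <;> nlinarith [mul_nonneg hu hv, mul_le_mul_of_nonneg_left hgt.le hv]

lemma exists_le_sq_add_fbmVar {H a s x : ℝ} (hH₀ : 0 < H) (hH₁ : H < 1) (hs : 0 < s)
    (hx : x ≠ 0) : ∃ δ > 0, ∃ R m : ℝ, 0 < m ∧ ∀ b y t, t ∈ Icc 0 1 →
      (b, y, t) ∉ Icc (a - 1) (a + 1) ×ˢ Icc (-R) R ×ˢ Icc δ 1 →
      m ≤ (a - b) ^ 2 + fbmVar H s t x y := by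
  obtain ⟨δ, hδ, hnear⟩ :=
    mem_nhdsGE_iff_exists_Ico_subset.1 (eventually_abs_fbmCov_le hH₀ hH₁ hs)
  have hu := Real.rpow_pos_of_pos hs H
  have hδH := Real.rpow_pos_of_pos hδ H
  refine ⟨δ, hδ, (s ^ H * |x| + 1) / δ ^ H, min (3 / 4 * (s ^ H) ^ 2 * x ^ 2) 1,
    lt_min (by positivity) one_pos, fun b y t ⟨ht, ht1⟩ hbox => ?_⟩
  have hQ := fbmVar_nonneg hH₀.le hH₁.le hs.le ht x y
  by_cases htδ : t < δ
  · have : _ ≤ fbmVar H s t x y := three_quarters_le_gramForm (hnear ⟨ht, htδ⟩) x y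
    linarith [min_le_left (3 / 4 * (s ^ H) ^ 2 * x ^ 2) 1, sq_nonneg (a - b)]
  obtain hab | hR : 1 < |a - b| ∨ (s ^ H * |x| + 1) / δ ^ H < |y| := by
    by_contra! h
    rw [abs_le, abs_le] at h
    exact hbox ⟨⟨by linarith, by linarith⟩, h.2, not_lt.1 htδ, ht1⟩
  · have : 1 ≤ (a - b) ^ 2 := by nlinarith [sq_abs (a - b)]
    linarith [min_le_right (3 / 4 * (s ^ H) ^ 2 * x ^ 2) 1]
  · rw [div_lt_iff₀ hδH] at hR
    have hv : δ ^ H ≤ t ^ H := Real.rpow_le_rpow hδ.le (not_lt.1 htδ) hH₀.le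
    have : 1 ≤ (s ^ H * |x| - t ^ H * |y|) ^ 2 := by
      nlinarith [mul_le_mul_of_nonneg_right hv (abs_nonneg y)]
    linarith [min_le_right (3 / 4 * (s ^ H) ^ 2 * x ^ 2) 1, sq_nonneg (a - b),
      sq_sub_le_fbmVar hH₀.le hH₁.le hs.le ht x y]

lemma exists_pos_forall_le_of_isCompact {X : Type*} [TopologicalSpace X] {f : X → ℝ}
    {S K : Set X} {m : ℝ} (hK : IsCompact K) (hf : ContinuousOn f K) (hKpos : ∀ x ∈ K, 0 < f x)
    (hm : 0 < m) (hfar : ∀ x ∈ S, x ∉ K → m ≤ f x) : ∃ m' > 0, ∀ x ∈ S, m' ≤ f x := by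
  obtain ⟨m', hm', hK'⟩ := hK.exists_forall_le' hf hKpos
  refine ⟨min m m', lt_min hm hm', fun x hx => ?_⟩
  by_cases hxK : x ∈ K
  · exact (min_le_right _ _).trans (hK' x hxK)
  · exact (min_le_left _ _).trans (hfar x hx hxK)

lemma sq_add_fbmVar_eq_zero_iff {H α₀ β₀ θ₀ α β θ : ℝ} (hH₀ : 0 < H) (hH₁ : H < 1)
    (hθ₀ : 0 < θ₀) (hθ : 0 ≤ θ) (hβ₀ : β₀ ≠ 0) :
    (α₀ - α) ^ 2 + fbmVar H θ₀ θ β₀ β = 0 ↔ (α, β, θ) = (α₀, β₀, θ₀) := by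
  rw [add_eq_zero_iff_of_nonneg (sq_nonneg _) (fbmVar_nonneg hH₀.le hH₁.le hθ₀.le hθ β₀ β),
    fbmVar_eq_zero_iff hH₀ hH₁ hθ₀ hθ hβ₀]
  simp only [Prod.mk.injEq, sq_eq_zero_iff, sub_eq_zero]
  grind

/-- Unique and well-separated minimum of the population least-squares criterion
`Φ(α,β,θ) = (α₀−α)² + (β₀−β)²θ₀^(2H) + ββ₀|θ₀−θ|^(2H) + β(β₀−β)(θ₀^(2H) − θ^(2H))`
in the point impact model. -/
theorem population_criterion_well_separated_min
    (H : ℝ) (hH : H ∈ Set.Ioo (0:ℝ) 1)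
    (α₀ β₀ θ₀ : ℝ) (hβ₀ : β₀ ≠ 0) (hθ₀ : θ₀ ∈ Set.Ioo (0:ℝ) 1)
    (Φ : ℝ → ℝ → ℝ → ℝ)
    (hΦ : ∀ α β θ, Φ α β θ = (α₀ - α) ^ 2 + (β₀ - β) ^ 2 * θ₀ ^ (2 * H)
        + β * β₀ * |θ₀ - θ| ^ (2 * H) + β * (β₀ - β) * (θ₀ ^ (2 * H) - θ ^ (2 * H))) :
    (∀ α β : ℝ, ∀ θ ∈ Set.Icc (0:ℝ) 1,
        0 ≤ Φ α β θ ∧ (Φ α β θ = 0 ↔ (α, β, θ) = (α₀, β₀, θ₀))) ∧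
    (∀ G : Set (ℝ × ℝ × ℝ), IsOpen G → (α₀, β₀, θ₀) ∈ G →
        ∃ m > (0:ℝ), ∀ α β : ℝ, ∀ θ ∈ Set.Icc (0:ℝ) 1,
          (α, β, θ) ∉ G → m ≤ Φ α β θ) := by
  obtain ⟨hH₀, hH₁⟩ := hH
  obtain ⟨hθ₀, -⟩ := hθ₀
  have hΦ' : ∀ α β θ, 0 ≤ θ → Φ α β θ = (α₀ - α) ^ 2 + fbmVar H θ₀ θ β₀ β := fun α β θ hθ => by
    rw [hΦ, fbmVar_eq hθ₀.le hθ]; ring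
  have hunique : ∀ α β : ℝ, ∀ θ ∈ Set.Icc (0:ℝ) 1,
      0 ≤ Φ α β θ ∧ (Φ α β θ = 0 ↔ (α, β, θ) = (α₀, β₀, θ₀)) := by
    rintro α β θ ⟨hθ, -⟩
    rw [hΦ' α β θ hθ, sq_add_fbmVar_eq_zero_iff hH₀ hH₁ hθ₀ hθ hβ₀]
    exact ⟨add_nonneg (sq_nonneg _) (fbmVar_nonneg hH₀.le hH₁.le hθ₀.le hθ β₀ β), Iff.rfl⟩
  refine ⟨hunique, fun G hG hmem => ?_⟩
  obtain ⟨δ, hδ, R, m, hm, hfar⟩ := exists_le_sq_add_fbmVar (a := α₀) hH₀ hH₁ hθ₀ hβ₀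
  have hcont : Continuous fun p : ℝ × ℝ × ℝ => Φ p.1 p.2.1 p.2.2 := by
    simp only [hΦ]
    fun_prop (disch := positivity)
  set K := (Icc (α₀ - 1) (α₀ + 1) ×ˢ Icc (-R) R ×ˢ Icc δ 1) \ G
  have hKpos : ∀ p ∈ K, 0 < Φ p.1 p.2.1 p.2.2 := by
    rintro ⟨α, β, θ⟩ ⟨⟨-, -, hδθ, hθ1⟩, hnG⟩
    obtain ⟨h0, h1⟩ := hunique α β θ ⟨hδ.le.trans hδθ, hθ1⟩
    exact h0.lt_of_ne fun h => hnG (h1.1 h.symm ▸ hmem)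
  have hoff : ∀ p ∈ {p : ℝ × ℝ × ℝ | p.2.2 ∈ Icc 0 1 ∧ p ∉ G}, p ∉ K →
      m ≤ Φ p.1 p.2.1 p.2.2 := by
    rintro ⟨α, β, θ⟩ ⟨hθ, hnG⟩ hp
    rw [hΦ' α β θ hθ.1]
    exact hfar α β θ hθ fun h => hp ⟨h, hnG⟩
  obtain ⟨m', hm', hsep⟩ := exists_pos_forall_le_of_isCompact
    ((isCompact_Icc.prod (isCompact_Icc.prod isCompact_Icc)).diff hG) hcont.continuousOn
    hKpos hm hoff
  exact ⟨m', hm', fun α β θ hθ hnG => hsep (α, β, θ) ⟨hθ, hnG⟩⟩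
end

section
/- Uniform drift localization limit (Section 7.3): Fix H ∈ (0,1), α₀ ∈ ℝ, β₀ ∈ ℝ, θ₀ ∈ (0,1), and define Φ(α, β, θ) = (α₀ − α)² + (β₀ − β)² θ₀^(2H) + β β₀ |θ₀ − θ|^(2H) + β (β₀ − β)(θ₀^(2H) − |θ|^(2H)) for (α, β, θ) ∈ ℝ³. Then for every K > 0, sup over h = (h₁, h₂, h₃) ∈ [−K, K]³ of | n · Φ(α₀ + h₁/√n, β₀ + h₂/√n, θ₀ + n^(−1/(2H)) h₃) − (h₁² + h₂² θ₀^(2H) + β₀² |h₃|^(2H)) | converges to 0 as n → ∞. -/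
/-!
Write `δ = n ^ (-1 / (2H)) h₃`, so that `n |δ| ^ (2H) = |h₃| ^ (2H)`. Expanding `Φ`, the quantity
`n Φ(α₀ + h₁/√n, β₀ + h₂/√n, θ₀ + δ)` is the limit plus `h₂ β₀ |h₃| ^ (2H) / √n` minus
`(β₀ + h₂/√n) h₂ √n (θ₀ ^ (2H) - |θ₀ + δ| ^ (2H))`. As `t ↦ |t| ^ (2H)` is differentiable at
`θ₀ ≠ 0`, the last difference is `O(|δ|)`, so the second error is `O(√n · n ^ (-1 / (2H)))`,
which tends to `0` because `H < 1`. Both bounds are uniform over the box.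
-/

open Filter Topology

lemma tendsto_iSup_abs_of_eventually_le {α ι : Type*} {l : Filter α} {f : α → ι → ℝ}
    {g : α → ℝ} (hg : Tendsto g l (𝓝 0)) (hfg : ∀ᶠ a in l, ∀ i, |f a i| ≤ g a) :
    Tendsto (fun a => ⨆ i, |f a i|) l (𝓝 0) := by
  have hmax : Tendsto (fun a => max (g a) 0) l (𝓝 0) := by
    simpa using hg.max (tendsto_const_nhds (x := (0 : ℝ)))
  refine squeeze_zero' (.of_forall fun a => Real.iSup_nonneg fun i => abs_nonneg _) ?_ hmax
  filter_upwards [hfg] with a ha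
  exact Real.iSup_le (fun i => (ha i).trans (le_max_left _ _)) (le_max_right _ _)

lemma DifferentiableAt.exists_norm_sub_le {𝕜 E F : Type*} [NontriviallyNormedField 𝕜]
    [NormedAddCommGroup E] [NormedSpace 𝕜 E] [NormedAddCommGroup F] [NormedSpace 𝕜 F]
    {f : E → F} {x₀ : E} (hf : DifferentiableAt 𝕜 f x₀) :
    ∃ C > 0, ∃ ε > 0, ∀ δ, ‖δ‖ < ε → ‖f (x₀ + δ) - f x₀‖ ≤ C * ‖δ‖ := by
  obtain ⟨C, hC, hfC⟩ := hf.isBigO_sub.exists_pos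
  obtain ⟨ε, hε, h⟩ := Metric.eventually_nhds_iff.1 hfC.bound
  refine ⟨C, hC, ε, hε, fun δ hδ => ?_⟩
  simpa using h (y := x₀ + δ) (by simpa [dist_eq_norm] using hδ)

lemma tendsto_natCast_rpow_neg_atTop {a : ℝ} (ha : 0 < a) :
    Tendsto (fun n : ℕ => (n : ℝ) ^ (-a)) atTop (𝓝 0) :=
  (tendsto_rpow_neg_atTop ha).comp tendsto_natCast_atTop_atTop

lemma tendsto_inv_sqrt_natCast_atTop : Tendsto (fun n : ℕ => (√n)⁻¹) atTop (𝓝 0) := by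
  refine (tendsto_natCast_rpow_neg_atTop one_half_pos).congr fun n => ?_
  rw [Real.rpow_neg n.cast_nonneg, Real.sqrt_eq_rpow, one_div]

lemma tendsto_sqrt_mul_rpow_neg_one_div_atTop {p : ℝ} (hp0 : 0 < p) (hp2 : p < 2) :
    Tendsto (fun n : ℕ => √n * (n : ℝ) ^ (-1 / p)) atTop (𝓝 0) := by
  have hexp : 0 < 1 / p - 1 / 2 := by
    rw [sub_pos]; exact one_div_lt_one_div_of_lt hp0 hp2
  refine (tendsto_natCast_rpow_neg_atTop hexp).congr' ?_
  filter_upwards [eventually_gt_atTop 0] with n hn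
  rw [Real.sqrt_eq_rpow, ← Real.rpow_add (by positivity)]
  ring_nf

lemma sq_sqrt_mul_abs_rpow_neg_one_div_mul {x p : ℝ} (hx : 0 < x) (hp : p ≠ 0) (h : ℝ) :
    √x ^ 2 * |x ^ (-1 / p) * h| ^ p = |h| ^ p := by
  rw [Real.sq_sqrt hx.le, abs_mul, abs_of_nonneg (Real.rpow_nonneg hx.le _),
    Real.mul_rpow (Real.rpow_nonneg hx.le _) (abs_nonneg _), ← Real.rpow_mul hx.le,
    div_mul_cancel₀ _ hp, Real.rpow_neg_one, mul_inv_cancel_left₀ hx.ne']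

section PointImpact

variable {H α₀ β₀ θ₀ : ℝ} {Φ : ℝ → ℝ → ℝ → ℝ}

lemma sq_mul_localized_sub_eq
    (hΦ : ∀ α β θ, Φ α β θ = (α₀ - α) ^ 2 + (β₀ - β) ^ 2 * θ₀ ^ (2 * H)
        + β * β₀ * |θ₀ - θ| ^ (2 * H) + β * (β₀ - β) * (θ₀ ^ (2 * H) - |θ| ^ (2 * H)))
    {s : ℝ} (hs : s ≠ 0) (h₁ h₂ δ : ℝ) :
    s ^ 2 * Φ (α₀ + h₁ / s) (β₀ + h₂ / s) (θ₀ + δ)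
        - (h₁ ^ 2 + h₂ ^ 2 * θ₀ ^ (2 * H) + β₀ ^ 2 * (s ^ 2 * |δ| ^ (2 * H)))
      = h₂ * β₀ * (s ^ 2 * |δ| ^ (2 * H)) / s
        - (β₀ + h₂ / s) * h₂ * s * (θ₀ ^ (2 * H) - |θ₀ + δ| ^ (2 * H)) := by
  simp only [hΦ, sub_add_cancel_left, abs_neg]
  field_simp
  ring

lemma abs_sq_mul_localized_sub_le
    (hΦ : ∀ α β θ, Φ α β θ = (α₀ - α) ^ 2 + (β₀ - β) ^ 2 * θ₀ ^ (2 * H)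
        + β * β₀ * |θ₀ - θ| ^ (2 * H) + β * (β₀ - β) * (θ₀ ^ (2 * H) - |θ| ^ (2 * H)))
    {s K C h₁ h₂ δ : ℝ} (hs : 1 ≤ s) (hh₂ : |h₂| ≤ K)
    (hC : |θ₀ ^ (2 * H) - |θ₀ + δ| ^ (2 * H)| ≤ C * |δ|) :
    |s ^ 2 * Φ (α₀ + h₁ / s) (β₀ + h₂ / s) (θ₀ + δ)
        - (h₁ ^ 2 + h₂ ^ 2 * θ₀ ^ (2 * H) + β₀ ^ 2 * (s ^ 2 * |δ| ^ (2 * H)))|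
      ≤ K * |β₀| * (s ^ 2 * |δ| ^ (2 * H)) / s + (|β₀| + K) * K * s * (C * |δ|) := by
  have hK : 0 ≤ K := (abs_nonneg _).trans hh₂
  have hs0 : 0 < s := one_pos.trans_le hs
  have hβ : |β₀ + h₂ / s| ≤ |β₀| + K := by
    calc |β₀ + h₂ / s| ≤ |β₀| + |h₂ / s| := abs_add_le _ _
      _ = |β₀| + |h₂| / s := by rw [abs_div, abs_of_pos hs0]
      _ ≤ |β₀| + K := by gcongr; exact (div_le_self (abs_nonneg _) hs).trans hh₂
  rw [sq_mul_localized_sub_eq hΦ hs0.ne']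
  calc _ ≤ |h₂ * β₀ * (s ^ 2 * |δ| ^ (2 * H)) / s|
        + |(β₀ + h₂ / s) * h₂ * s * (θ₀ ^ (2 * H) - |θ₀ + δ| ^ (2 * H))| := abs_sub _ _
    _ ≤ _ := by
      have hD : 0 ≤ s ^ 2 * |δ| ^ (2 * H) := by positivity
      simp only [abs_mul, abs_div, abs_of_pos hs0, abs_of_nonneg hD]
      gcongr

lemma abs_natCast_mul_localized_sub_le
    (hΦ : ∀ α β θ, Φ α β θ = (α₀ - α) ^ 2 + (β₀ - β) ^ 2 * θ₀ ^ (2 * H)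
        + β * β₀ * |θ₀ - θ| ^ (2 * H) + β * (β₀ - β) * (θ₀ ^ (2 * H) - |θ| ^ (2 * H)))
    (hH : 0 < H) {n : ℕ} (hn : 1 ≤ n) {K C h₁ h₂ h₃ : ℝ} (hC0 : 0 ≤ C) (hh₂ : |h₂| ≤ K)
    (hh₃ : |h₃| ≤ K)
    (hC : |θ₀ ^ (2 * H) - |θ₀ + (n : ℝ) ^ (-(1 : ℝ) / (2 * H)) * h₃| ^ (2 * H)|
      ≤ C * |(n : ℝ) ^ (-(1 : ℝ) / (2 * H)) * h₃|) :
    |(n : ℝ) * Φ (α₀ + h₁ / √n) (β₀ + h₂ / √n) (θ₀ + (n : ℝ) ^ (-(1 : ℝ) / (2 * H)) * h₃)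
        - (h₁ ^ 2 + h₂ ^ 2 * θ₀ ^ (2 * H) + β₀ ^ 2 * |h₃| ^ (2 * H))|
      ≤ K * |β₀| * K ^ (2 * H) * (√n)⁻¹
        + (|β₀| + K) * K * (C * K) * (√n * (n : ℝ) ^ (-(1 : ℝ) / (2 * H))) := by
  have hn0 : (0 : ℝ) < n := by exact_mod_cast hn
  have hK : 0 ≤ K := (abs_nonneg _).trans hh₂
  have hr : 0 ≤ (n : ℝ) ^ (-(1 : ℝ) / (2 * H)) := Real.rpow_nonneg hn0.le _
  have key := abs_sq_mul_localized_sub_le hΦ (h₁ := h₁)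
    (Real.one_le_sqrt.2 (Nat.one_le_cast.2 hn)) hh₂ hC
  rw [sq_sqrt_mul_abs_rpow_neg_one_div_mul hn0 (by positivity) h₃, Real.sq_sqrt hn0.le] at key
  refine key.trans (add_le_add ?_ ?_)
  · rw [div_eq_mul_inv]
    gcongr
  · rw [abs_mul, abs_of_nonneg hr]
    calc _ = (|β₀| + K) * K * (C * |h₃|) * (√n * (n : ℝ) ^ (-(1 : ℝ) / (2 * H))) := by ring
      _ ≤ _ := by gcongr

end PointImpact

theorem drift_localization_uniform_limit_general
    (H : ℝ) (hH : H ∈ Set.Ioo (0:ℝ) 1)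
    (α₀ β₀ θ₀ : ℝ) (hθ₀ : θ₀ ∈ Set.Ioo (0:ℝ) 1)
    (Φ : ℝ → ℝ → ℝ → ℝ)
    (hΦ : ∀ α β θ, Φ α β θ = (α₀ - α) ^ 2 + (β₀ - β) ^ 2 * θ₀ ^ (2 * H)
        + β * β₀ * |θ₀ - θ| ^ (2 * H) + β * (β₀ - β) * (θ₀ ^ (2 * H) - |θ| ^ (2 * H)))
    (K : ℝ) :
    Tendsto (fun n : ℕ =>
        ⨆ h : Set.Icc (-K) K × Set.Icc (-K) K × Set.Icc (-K) K,
          |(n : ℝ) * Φ (α₀ + (h.1 : ℝ) / Real.sqrt n) (β₀ + (h.2.1 : ℝ) / Real.sqrt n)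
              (θ₀ + (n : ℝ) ^ (-(1 : ℝ) / (2 * H)) * (h.2.2 : ℝ))
            - ((h.1 : ℝ) ^ 2 + (h.2.1 : ℝ) ^ 2 * θ₀ ^ (2 * H)
                + β₀ ^ 2 * |(h.2.2 : ℝ)| ^ (2 * H))|)
      atTop (nhds 0) := by
  obtain ⟨hH0, hH1⟩ := hH
  have hθ₀0 : θ₀ ≠ 0 := hθ₀.1.ne'
  obtain ⟨C, hC0, ε, hε, hC⟩ := ((differentiableAt_abs hθ₀0).rpow_const (p := 2 * H)
    (Or.inl (abs_ne_zero.2 hθ₀0))).exists_norm_sub_le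
  have hrK : Tendsto (fun n : ℕ => (n : ℝ) ^ (-(1 : ℝ) / (2 * H)) * K) atTop (𝓝 0) := by
    simpa [neg_div] using
      (tendsto_natCast_rpow_neg_atTop (by positivity : 0 < 1 / (2 * H))).mul_const K
  refine tendsto_iSup_abs_of_eventually_le (g := fun n : ℕ => K * |β₀| * K ^ (2 * H) * (√n)⁻¹
    + (|β₀| + K) * K * (C * K) * (√n * (n : ℝ) ^ (-(1 : ℝ) / (2 * H)))) ?_ ?_
  · have hp2 : 2 * H < 2 := by linarith
    simpa using (tendsto_inv_sqrt_natCast_atTop.const_mul _).add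
      ((tendsto_sqrt_mul_rpow_neg_one_div_atTop (by positivity) hp2).const_mul _)
  filter_upwards [eventually_ge_atTop 1, hrK.eventually_lt_const hε] with n hn hnK
  rintro ⟨⟨h₁, hh₁⟩, ⟨h₂, hh₂⟩, ⟨h₃, hh₃⟩⟩
  have hδ : |(n : ℝ) ^ (-(1 : ℝ) / (2 * H)) * h₃| ≤ (n : ℝ) ^ (-(1 : ℝ) / (2 * H)) * K := by
    rw [abs_mul, abs_of_nonneg (Real.rpow_nonneg n.cast_nonneg _)]
    gcongr
    exact abs_le.2 hh₃
  refine abs_natCast_mul_localized_sub_le hΦ hH0 hn hC0.le (abs_le.2 hh₂) (abs_le.2 hh₃) ?_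
  simpa [abs_of_pos hθ₀.1, abs_sub_comm] using hC _ (hδ.trans_lt hnK)

/-- Uniform drift localization limit: for every `K > 0`,
`sup_{h ∈ [−K,K]³} | n Φ(α₀ + h₁/√n, β₀ + h₂/√n, θ₀ + n^(−1/(2H)) h₃)
  − (h₁² + h₂² θ₀^(2H) + β₀² |h₃|^(2H)) | → 0`. -/
theorem drift_localization_uniform_limit
    (H : ℝ) (hH : H ∈ Set.Ioo (0:ℝ) 1)
    (α₀ β₀ θ₀ : ℝ) (hθ₀ : θ₀ ∈ Set.Ioo (0:ℝ) 1)
    (Φ : ℝ → ℝ → ℝ → ℝ)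
    (hΦ : ∀ α β θ, Φ α β θ = (α₀ - α) ^ 2 + (β₀ - β) ^ 2 * θ₀ ^ (2 * H)
        + β * β₀ * |θ₀ - θ| ^ (2 * H) + β * (β₀ - β) * (θ₀ ^ (2 * H) - |θ| ^ (2 * H)))
    (K : ℝ) (hK : 0 < K) :
    Tendsto (fun n : ℕ =>
        ⨆ h : Set.Icc (-K) K × Set.Icc (-K) K × Set.Icc (-K) K,
          |(n : ℝ) * Φ (α₀ + (h.1 : ℝ) / Real.sqrt n) (β₀ + (h.2.1 : ℝ) / Real.sqrt n)
              (θ₀ + (n : ℝ) ^ (-(1 : ℝ) / (2 * H)) * (h.2.2 : ℝ))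
            - ((h.1 : ℝ) ^ 2 + (h.2.1 : ℝ) ^ 2 * θ₀ ^ (2 * H)
                + β₀ ^ 2 * |(h.2.2 : ℝ)| ^ (2 * H))|)
      atTop (nhds 0) :=
  drift_localization_uniform_limit_general H hH α₀ β₀ θ₀ hθ₀ Φ hΦ K
end
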